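/- arXiv:1804.02772 — 5 statements merged into one kernel-verified Lean document; each statement's English description precedes it below -/
import Mathlib

section
/- Let (V, μ) be a σ-finite measure space, λ : V → ℝ measurable with λ(x) > 0 for all x, ρ : V × V → ℝ measurable, g : V → EuclideanSpace ℝ (Fin p) measurable, and k > 0 a real number. Assume the functions (x,y) ↦ (g(x)·g(y)) ρ(x,y), (x,y) ↦ λ(x)λ(y)(g(x)·g(y)), x ↦ ‖g(x)‖² λ(x), and x ↦ λ(x) • g(x) are integrable (on V×V with μ⊗μ, resp. on V with μ). Then (1/k²) ∫∫ (g(x)·g(y)) ρ(x,y) dμ(x)dμ(y) + (1/k²) ∫ ‖g(x)‖² λ(x) dμ(x) − ‖(1/k) ∫ λ(x) • g(x) dμ(x)‖² = (1/k²) ∫∫ λ(x)λ(y)(g(x)·g(y)) (ρ(x,y)/(λ(x)λ(y)) − 1) dμ(x)dμ(y) + (1/k²) ∫ ‖g(x)‖² λ(x) dμ(x). (Theorem 1: closed form of the variance var_P(Ĝ) of the point-process mini-batch gradient estimator.) -/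
open MeasureTheory
open scoped InnerProductSpace

/-!
Since `λ > 0`, the integrand on the right is `⟪g x, g y⟫ ρ(x,y) - ⟪λ(x) g(x), λ(y) g(y)⟫`, and by
Fubini the integral of `⟪f x, f y⟫` over `μ ⊗ μ` is `‖∫ f dμ‖²`; for `f = λ • g` this is the
squared-mean term on the left.
-/

section InnerProd

variable {α β E : Type*} [MeasurableSpace α] [MeasurableSpace β] {μ : Measure α} {ν : Measure β}
  [NormedAddCommGroup E] [InnerProductSpace ℝ E] {f : α → E} {g : β → E}

theorem MeasureTheory.Integrable.inner_prod (hf : Integrable f μ) (hg : Integrable g ν) :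
    Integrable (fun z : α × β => ⟪f z.1, g z.2⟫_ℝ) (μ.prod ν) :=
  hf.op_fst_snd (by fun_prop) ⟨‖innerSL ℝ (E := E)‖, (innerSL ℝ).le_opNorm₂⟩ hg

variable [SFinite μ] [SFinite ν] [CompleteSpace E]

theorem integral_prod_inner (hf : Integrable f μ) (hg : Integrable g ν) :
    ∫ z, ⟪f z.1, g z.2⟫_ℝ ∂μ.prod ν = ⟪∫ x, f x ∂μ, ∫ y, g y ∂ν⟫_ℝ :=
  integral_prod_bilin (innerSL ℝ) hf hg

theorem sq_norm_integral_eq_integral_prod_inner (hf : Integrable f μ) :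
    ‖∫ x, f x ∂μ‖ ^ 2 = ∫ z, ⟪f z.1, f z.2⟫_ℝ ∂μ.prod μ := by
  rw [integral_prod_inner hf hf, real_inner_self_eq_norm_sq]

end InnerProd

theorem mul_mul_div_sub_one {a c r : ℝ} (ha : a ≠ 0) : a * c * (r / a - 1) = c * r - a * c := by
  field_simp

theorem variance_formula_point_process_general
    {V : Type*} [MeasurableSpace V] (μ : Measure V) [SigmaFinite μ]
    {p : ℕ} (lam : V → ℝ) (ρ : V × V → ℝ) (g : V → EuclideanSpace ℝ (Fin p)) (k : ℝ)
    (hlampos : ∀ x, 0 < lam x)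
    (h1 : Integrable (fun z : V × V => ⟪g z.1, g z.2⟫_ℝ * ρ z) (μ.prod μ))
    (h4 : Integrable (fun x => lam x • g x) μ) :
    (1 / k ^ 2) * ∫ z : V × V, ⟪g z.1, g z.2⟫_ℝ * ρ z ∂(μ.prod μ)
      + (1 / k ^ 2) * ∫ x, ‖g x‖ ^ 2 * lam x ∂μ
      - ‖(1 / k) • ∫ x, lam x • g x ∂μ‖ ^ 2
    = (1 / k ^ 2) * ∫ z : V × V,
        lam z.1 * lam z.2 * ⟪g z.1, g z.2⟫_ℝ * (ρ z / (lam z.1 * lam z.2) - 1) ∂(μ.prod μ)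
      + (1 / k ^ 2) * ∫ x, ‖g x‖ ^ 2 * lam x ∂μ := by
  have hpair (z : V × V) :
      lam z.1 * lam z.2 * ⟪g z.1, g z.2⟫_ℝ = ⟪lam z.1 • g z.1, lam z.2 • g z.2⟫_ℝ := by
    rw [real_inner_smul_left, real_inner_smul_right]
    ring
  have hintegrand (z : V × V) :
      lam z.1 * lam z.2 * ⟪g z.1, g z.2⟫_ℝ * (ρ z / (lam z.1 * lam z.2) - 1)
        = ⟪g z.1, g z.2⟫_ℝ * ρ z - ⟪lam z.1 • g z.1, lam z.2 • g z.2⟫_ℝ := by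
    rw [mul_mul_div_sub_one (mul_pos (hlampos z.1) (hlampos z.2)).ne', hpair]
  simp_rw [hintegrand]
  rw [integral_sub h1 (h4.inner_prod h4), ← sq_norm_integral_eq_integral_prod_inner h4,
    norm_smul, mul_pow, Real.norm_eq_abs, sq_abs]
  ring

/-- Theorem 1: closed form of the variance of the point-process mini-batch
gradient estimator. -/
theorem variance_formula_point_process
    {V : Type*} [MeasurableSpace V] (μ : Measure V) [SigmaFinite μ]
    {p : ℕ} (lam : V → ℝ) (ρ : V × V → ℝ) (g : V → EuclideanSpace ℝ (Fin p)) (k : ℝ)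
    (hlam : Measurable lam) (hlampos : ∀ x, 0 < lam x)
    (hρ : Measurable ρ) (hg : Measurable g) (hk : 0 < k)
    (h1 : Integrable (fun z : V × V => ⟪g z.1, g z.2⟫_ℝ * ρ z) (μ.prod μ))
    (h2 : Integrable (fun z : V × V => lam z.1 * lam z.2 * ⟪g z.1, g z.2⟫_ℝ) (μ.prod μ))
    (h3 : Integrable (fun x => ‖g x‖ ^ 2 * lam x) μ)
    (h4 : Integrable (fun x => lam x • g x) μ) :
    (1 / k ^ 2) * ∫ z : V × V, ⟪g z.1, g z.2⟫_ℝ * ρ z ∂(μ.prod μ)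
      + (1 / k ^ 2) * ∫ x, ‖g x‖ ^ 2 * lam x ∂μ
      - ‖(1 / k) • ∫ x, lam x • g x ∂μ‖ ^ 2
    = (1 / k ^ 2) * ∫ z : V × V,
        lam z.1 * lam z.2 * ⟪g z.1, g z.2⟫_ℝ * (ρ z / (lam z.1 * lam z.2) - 1) ∂(μ.prod μ)
      + (1 / k ^ 2) * ∫ x, ‖g x‖ ^ 2 * lam x ∂μ :=
  variance_formula_point_process_general μ lam ρ g k hlampos h1 h4
end

section
/- Let (V, μ) be a σ-finite measure space, λ : V → ℝ measurable with λ(x) > 0 for all x, ρ : V × V → ℝ measurable, g : V → EuclideanSpace ℝ (Fin p) measurable, k > 0, with the integrands of Theorem 1 integrable. If ρ(x,y) ≤ λ(x)λ(y) for all (x,y) and g(x)·g(y) ≥ 0 for all (x,y), then the variance of the mini-batch gradient estimator under the repulsive point process is at most the variance under standard SGD with the same intensity: var_P(Ĝ) ≤ (1/k²) ∫ ‖g(x)‖² λ(x) dμ(x). -/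
open MeasureTheory
open scoped InnerProductSpace

/-- A repulsive point process has variance at most that of standard SGD with the
same intensity. -/
theorem repulsive_variance_le_sgd
    {V : Type*} [MeasurableSpace V] (μ : Measure V) [SigmaFinite μ]
    {p : ℕ} (lam : V → ℝ) (ρ : V × V → ℝ) (g : V → EuclideanSpace ℝ (Fin p)) (k : ℝ)
    (hlam : Measurable lam) (hlampos : ∀ x, 0 < lam x)
    (hρ : Measurable ρ) (hg : Measurable g) (hk : 0 < k)
    (h1 : Integrable (fun z : V × V => ⟪g z.1, g z.2⟫_ℝ * ρ z) (μ.prod μ))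
    (h2 : Integrable (fun z : V × V => lam z.1 * lam z.2 * ⟪g z.1, g z.2⟫_ℝ) (μ.prod μ))
    (h3 : Integrable (fun x => ‖g x‖ ^ 2 * lam x) μ)
    (h4 : Integrable (fun x => lam x • g x) μ)
    (hrep : ∀ x y : V, ρ (x, y) ≤ lam x * lam y)
    (halign : ∀ x y : V, 0 ≤ ⟪g x, g y⟫_ℝ) :
    (1 / k ^ 2) * ∫ z : V × V, ⟪g z.1, g z.2⟫_ℝ * ρ z ∂(μ.prod μ)
      + (1 / k ^ 2) * ∫ x, ‖g x‖ ^ 2 * lam x ∂μ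
      - ‖(1 / k) • ∫ x, lam x • g x ∂μ‖ ^ 2
    ≤ (1 / k ^ 2) * ∫ x, ‖g x‖ ^ 2 * lam x ∂μ := by
  set I := ∫ x, lam x • g x ∂μ with hI
  have key : ∫ z : V × V, ⟪g z.1, g z.2⟫_ℝ * ρ z ∂(μ.prod μ) ≤ ‖I‖ ^ 2 := by
    have hmono : ∫ z : V × V, ⟪g z.1, g z.2⟫_ℝ * ρ z ∂(μ.prod μ)
        ≤ ∫ z : V × V, lam z.1 * lam z.2 * ⟪g z.1, g z.2⟫_ℝ ∂(μ.prod μ) := by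
      refine integral_mono h1 h2 fun z => ?_
      have h0 := halign z.1 z.2
      calc ⟪g z.1, g z.2⟫_ℝ * ρ z ≤ ⟪g z.1, g z.2⟫_ℝ * (lam z.1 * lam z.2) :=
            mul_le_mul_of_nonneg_left (hrep z.1 z.2) h0
        _ = lam z.1 * lam z.2 * ⟪g z.1, g z.2⟫_ℝ := by ring
    have heq : ∫ z : V × V, lam z.1 * lam z.2 * ⟪g z.1, g z.2⟫_ℝ ∂(μ.prod μ) = ‖I‖ ^ 2 := by
      have hswap : ∫ z : V × V, lam z.1 * lam z.2 * ⟪g z.1, g z.2⟫_ℝ ∂(μ.prod μ)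
          = ∫ x, ∫ y, lam x * lam y * ⟪g x, g y⟫_ℝ ∂μ ∂μ := integral_prod _ h2
      rw [hswap]
      have hinner : ∀ x y : V, lam x * lam y * ⟪g x, g y⟫_ℝ = ⟪lam x • g x, lam y • g y⟫_ℝ := by
        intro x y
        rw [real_inner_smul_left, real_inner_smul_right]; ring
      calc ∫ x, ∫ y, lam x * lam y * ⟪g x, g y⟫_ℝ ∂μ ∂μ
          = ∫ x, ⟪lam x • g x, I⟫_ℝ ∂μ := by
            refine integral_congr_ae (Filter.Eventually.of_forall fun x => ?_)
            simp_rw [hinner]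
            exact integral_inner h4 (lam x • g x)
        _ = ⟪I, I⟫_ℝ := by
            have := integral_inner (𝕜 := ℝ) h4 I
            calc ∫ x, ⟪lam x • g x, I⟫_ℝ ∂μ = ∫ x, ⟪I, lam x • g x⟫_ℝ ∂μ := by
                  simp_rw [real_inner_comm]
              _ = ⟪I, I⟫_ℝ := this
        _ = ‖I‖ ^ 2 := real_inner_self_eq_norm_sq I
    linarith
  have hnorm : ‖(1 / k) • I‖ ^ 2 = (1 / k ^ 2) * ‖I‖ ^ 2 := by
    rw [norm_smul]
    rw [Real.norm_eq_abs, abs_of_pos (by positivity : (0:ℝ) < 1 / k)]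
    field_simp
  have hk2 : (0:ℝ) < 1 / k ^ 2 := by positivity
  nlinarith [mul_le_mul_of_nonneg_left key hk2.le]
end

section
/- Let V be a measurable subset of ℝ^d equipped with the Lebesgue measure μ, λ : V → ℝ measurable with λ(x) > 0 for all x, g : V → EuclideanSpace ℝ (Fin p) measurable, k > 0, and r > 0. Suppose the second-order product density ρ of Poisson disk sampling with radius r satisfies ρ(x,y) = 0 whenever ‖x − y‖ ≤ r and ρ(x,y) = λ(x)λ(y) whenever ‖x − y‖ > r, that g(x)·g(y) ≥ 0 whenever ‖x − y‖ ≤ r, and that the integrands below are integrable. Then the variance of the mini-batch gradient estimator satisfies var_P(Ĝ) = (1/k²) ∫ ‖g(x)‖² λ(x) dμ(x) − (1/k²) ∫∫_{‖x−y‖ ≤ r} λ(x)λ(y)(g(x)·g(y)) dμ(x)dμ(y), and the subtracted term is nonnegative, so var_P(Ĝ) ≤ (1/k²) ∫ ‖g(x)‖² λ(x) dμ(x), the variance of standard SGD. (Variance reduction of Poisson disk sampling.) -/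
open MeasureTheory
open scoped InnerProductSpace

/-- Variance reduction of Poisson disk sampling with radius `r`: the variance of the
mini-batch gradient estimator equals the SGD variance minus a nonnegative term coming
from the pairs of points at distance at most `r`. -/
theorem poisson_disk_variance_reduction
    {d p : ℕ} (V : Set (EuclideanSpace ℝ (Fin d))) (hV : MeasurableSet V)
    (lam : EuclideanSpace ℝ (Fin d) → ℝ)
    (ρ : EuclideanSpace ℝ (Fin d) × EuclideanSpace ℝ (Fin d) → ℝ)
    (g : EuclideanSpace ℝ (Fin d) → EuclideanSpace ℝ (Fin p))
    (k r : ℝ) (hk : 0 < k) (hr : 0 < r)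
    (hlam : Measurable lam) (hlampos : ∀ x ∈ V, 0 < lam x)
    (hρ : Measurable ρ) (hg : Measurable g)
    (hρ_near : ∀ x ∈ V, ∀ y ∈ V, ‖x - y‖ ≤ r → ρ (x, y) = 0)
    (hρ_far : ∀ x ∈ V, ∀ y ∈ V, r < ‖x - y‖ → ρ (x, y) = lam x * lam y)
    (halign : ∀ x ∈ V, ∀ y ∈ V, ‖x - y‖ ≤ r → 0 ≤ ⟪g x, g y⟫_ℝ)
    (h1 : Integrable (fun z => ⟪g z.1, g z.2⟫_ℝ * ρ z)
      ((volume.restrict V).prod (volume.restrict V)))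
    (h2 : Integrable (fun z => lam z.1 * lam z.2 * ⟪g z.1, g z.2⟫_ℝ)
      ((volume.restrict V).prod (volume.restrict V)))
    (h3 : Integrable (fun x => ‖g x‖ ^ 2 * lam x) (volume.restrict V))
    (h4 : Integrable (fun x => lam x • g x) (volume.restrict V)) :
    ((1 / k ^ 2) * ∫ z, ⟪g z.1, g z.2⟫_ℝ * ρ z
        ∂((volume.restrict V).prod (volume.restrict V))
      + (1 / k ^ 2) * ∫ x, ‖g x‖ ^ 2 * lam x ∂(volume.restrict V)
      - ‖(1 / k) • ∫ x, lam x • g x ∂(volume.restrict V)‖ ^ 2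
    = (1 / k ^ 2) * ∫ x, ‖g x‖ ^ 2 * lam x ∂(volume.restrict V)
      - (1 / k ^ 2) * ∫ z in {z : EuclideanSpace ℝ (Fin d) × EuclideanSpace ℝ (Fin d) |
            ‖z.1 - z.2‖ ≤ r}, lam z.1 * lam z.2 * ⟪g z.1, g z.2⟫_ℝ
          ∂((volume.restrict V).prod (volume.restrict V)))
    ∧ (0 ≤ (1 / k ^ 2) * ∫ z in {z : EuclideanSpace ℝ (Fin d) × EuclideanSpace ℝ (Fin d) |
            ‖z.1 - z.2‖ ≤ r}, lam z.1 * lam z.2 * ⟪g z.1, g z.2⟫_ℝ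
          ∂((volume.restrict V).prod (volume.restrict V)))
    ∧ ((1 / k ^ 2) * ∫ z, ⟪g z.1, g z.2⟫_ℝ * ρ z
        ∂((volume.restrict V).prod (volume.restrict V))
      + (1 / k ^ 2) * ∫ x, ‖g x‖ ^ 2 * lam x ∂(volume.restrict V)
      - ‖(1 / k) • ∫ x, lam x • g x ∂(volume.restrict V)‖ ^ 2
      ≤ (1 / k ^ 2) * ∫ x, ‖g x‖ ^ 2 * lam x ∂(volume.restrict V)) := by
  set μ := volume.restrict V with hμ
  set π := μ.prod μ with hπ
  set S : Set (EuclideanSpace ℝ (Fin d) × EuclideanSpace ℝ (Fin d)) :=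
    {z | ‖z.1 - z.2‖ ≤ r} with hSdef
  have hS : MeasurableSet S := by
    have : Continuous fun z : EuclideanSpace ℝ (Fin d) × EuclideanSpace ℝ (Fin d) =>
        ‖z.1 - z.2‖ := (continuous_fst.sub continuous_snd).norm
    exact this.measurable measurableSet_Iic
  -- a.e. membership in V ×ˢ V
  have hmem : ∀ᵐ z ∂π, z ∈ V ×ˢ V := by
    have : π = (volume.prod volume).restrict (V ×ˢ V) := by
      rw [hπ, hμ, Measure.prod_restrict]
    rw [this]
    exact ae_restrict_mem (hV.prod hV)
  -- the ρ integral equals the far integral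
  have keyA : (∫ z, ⟪g z.1, g z.2⟫_ℝ * ρ z ∂π)
      = ∫ z in Sᶜ, lam z.1 * lam z.2 * ⟪g z.1, g z.2⟫_ℝ ∂π := by
    have hsplit := integral_add_compl hS h1
    have hnear0 : (∫ z in S, ⟪g z.1, g z.2⟫_ℝ * ρ z ∂π) = 0 := by
      rw [show (0:ℝ) = ∫ z in S, (0:ℝ) ∂π by simp]
      refine integral_congr_ae ?_
      filter_upwards [ae_restrict_mem hS, ae_restrict_of_ae hmem] with z hzS hzV
      rw [hρ_near z.1 hzV.1 z.2 hzV.2 hzS]; ring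
    have hfar : (∫ z in Sᶜ, ⟪g z.1, g z.2⟫_ℝ * ρ z ∂π)
        = ∫ z in Sᶜ, lam z.1 * lam z.2 * ⟪g z.1, g z.2⟫_ℝ ∂π := by
      refine integral_congr_ae ?_
      filter_upwards [ae_restrict_mem hS.compl, ae_restrict_of_ae hmem] with z hzS hzV
      have : r < ‖z.1 - z.2‖ := lt_of_not_ge hzS
      rw [hρ_far z.1 hzV.1 z.2 hzV.2 this]; ring
    rw [← hsplit, hnear0, hfar]; ring
  -- the norm-squared term equals the full double integral
  have keyC : ‖∫ x, lam x • g x ∂μ‖ ^ 2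
      = ∫ z, lam z.1 * lam z.2 * ⟪g z.1, g z.2⟫_ℝ ∂π := by
    have h2' : Integrable (fun z : EuclideanSpace ℝ (Fin d) × EuclideanSpace ℝ (Fin d) =>
        ⟪lam z.1 • g z.1, lam z.2 • g z.2⟫_ℝ) π := by
      refine h2.congr (Filter.Eventually.of_forall fun z => ?_)
      simp only [real_inner_smul_left, real_inner_smul_right]; ring
    have hinner : ⟪∫ x, lam x • g x ∂μ, ∫ x, lam x • g x ∂μ⟫_ℝ
        = ∫ x, ∫ y, ⟪lam x • g x, lam y • g y⟫_ℝ ∂μ ∂μ := by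
      rw [← integral_inner h4]
      refine integral_congr_ae (Filter.Eventually.of_forall fun x => ?_)
      show ⟪_, lam x • g x⟫_ℝ = _
      rw [real_inner_comm, ← integral_inner h4]
    rw [← real_inner_self_eq_norm_sq, hinner, MeasureTheory.integral_integral h2']
    refine integral_congr_ae (Filter.Eventually.of_forall fun z => ?_)
    simp only [real_inner_smul_left, real_inner_smul_right]; ring
  have keysplit : (∫ z, lam z.1 * lam z.2 * ⟪g z.1, g z.2⟫_ℝ ∂π)
      = (∫ z in S, lam z.1 * lam z.2 * ⟪g z.1, g z.2⟫_ℝ ∂π)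
        + ∫ z in Sᶜ, lam z.1 * lam z.2 * ⟪g z.1, g z.2⟫_ℝ ∂π :=
    (integral_add_compl hS h2).symm
  have keynn : 0 ≤ ∫ z in S, lam z.1 * lam z.2 * ⟪g z.1, g z.2⟫_ℝ ∂π := by
    refine setIntegral_nonneg_ae hS ?_
    filter_upwards [hmem] with z hzV hzS
    exact mul_nonneg (mul_nonneg (hlampos z.1 hzV.1).le (hlampos z.2 hzV.2).le)
      (halign z.1 hzV.1 z.2 hzV.2 hzS)
  have hnormsmul : ‖(1 / k) • ∫ x, lam x • g x ∂μ‖ ^ 2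
      = (1 / k ^ 2) * ‖∫ x, lam x • g x ∂μ‖ ^ 2 := by
    rw [norm_smul, mul_pow, Real.norm_eq_abs, sq_abs]
    ring
  have hk2 : (0:ℝ) ≤ 1 / k ^ 2 := by positivity
  refine ⟨?_, mul_nonneg hk2 keynn, ?_⟩
  · rw [keyA, hnormsmul, keyC, keysplit]; ring
  · rw [keyA, hnormsmul, keyC, keysplit]
    nlinarith [keynn]
end

section
/- Let (Ω, P) be a probability space, B : Ω → Finset (Fin N) a random mini-batch with measurable inclusion events, g : Fin N → EuclideanSpace ℝ (Fin p), and k > 0. With Ĝ(ω) := (1/k) Σ_{i ∈ B ω} g i, λ i := P(i ∈ B), and ρ i j := P(i ∈ B ∧ j ∈ B), the variance of the estimator satisfies E[‖Ĝ‖²] − ‖E[Ĝ]‖² = (1/k²) Σ_{i ≠ j} (ρ i j − λ i · λ j) · (g i · g j) + (1/k²) Σ_{i : Fin N} λ i · (1 − λ i) · ‖g i‖². (Exact discrete analog of the variance formula of Theorem 1, decomposing the variance into a pairwise-correlation term and a diagonal term.) -/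
/-! Writing `Ĝ = ∑ i, Xᵢ • g i` with `Xᵢ = k⁻¹ · 1{i ∈ B}`, the variance of a random combination
of fixed vectors is `∑ i j, cov(Xᵢ, Xⱼ) ⟪g i, g j⟫`. For indicators,
`cov(1_A, 1_C) = P(A ∩ C) - P(A) P(C)`, which on the diagonal is `λᵢ (1 - λᵢ)`. -/

open MeasureTheory ProbabilityTheory
open scoped InnerProductSpace

section

variable {ι E : Type*} [NormedAddCommGroup E] [InnerProductSpace ℝ E]

theorem norm_sum_smul_sq (s : Finset ι) (c : ι → ℝ) (v : ι → E) :
    ‖∑ i ∈ s, c i • v i‖ ^ 2 = ∑ i ∈ s, ∑ j ∈ s, c i * c j * ⟪v i, v j⟫_ℝ := by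
  simp_rw [← real_inner_self_eq_norm_sq, sum_inner, inner_sum, real_inner_smul_left,
    real_inner_smul_right, mul_assoc]

variable [CompleteSpace E] {Ω : Type*} [MeasurableSpace Ω] {P : Measure Ω}
  [IsProbabilityMeasure P]

theorem integral_norm_sum_smul_sq_sub_norm_integral_sq {s : Finset ι} {X : ι → Ω → ℝ}
    (hX : ∀ i ∈ s, MemLp (X i) 2 P) (v : ι → E) :
    ∫ ω, ‖∑ i ∈ s, X i ω • v i‖ ^ 2 ∂P - ‖∫ ω, ∑ i ∈ s, X i ω • v i ∂P‖ ^ 2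
      = ∑ i ∈ s, ∑ j ∈ s, cov[X i, X j; P] * ⟪v i, v j⟫_ℝ := by
  have hXX : ∀ i ∈ s, ∀ j ∈ s, Integrable (fun ω => X i ω * X j ω) P := fun i hi j hj =>
    (hX i hi).integrable_mul (hX j hj)
  have h_second_moment : ∫ ω, ‖∑ i ∈ s, X i ω • v i‖ ^ 2 ∂P
      = ∑ i ∈ s, ∑ j ∈ s, P[X i * X j] * ⟪v i, v j⟫_ℝ := by
    simp_rw [norm_sum_smul_sq]
    rw [integral_finsetSum _ fun i hi => integrable_finsetSum _ fun j hj =>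
      (hXX i hi j hj).mul_const _]
    refine Finset.sum_congr rfl fun i hi => ?_
    rw [integral_finsetSum _ fun j hj => (hXX i hi j hj).mul_const _]
    exact Finset.sum_congr rfl fun j _ => integral_mul_const _ _
  have h_mean : ∫ ω, ∑ i ∈ s, X i ω • v i ∂P = ∑ i ∈ s, P[X i] • v i := by
    rw [integral_finsetSum _ fun i hi => ((hX i hi).integrable one_le_two).smul_const _]
    exact Finset.sum_congr rfl fun i _ => integral_smul_const _ _
  rw [h_second_moment, h_mean, norm_sum_smul_sq, ← Finset.sum_sub_distrib]
  refine Finset.sum_congr rfl fun i hi => ?_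
  rw [← Finset.sum_sub_distrib]
  refine Finset.sum_congr rfl fun j hj => ?_
  rw [covariance_eq_sub (hX i hi) (hX j hj), sub_mul]

end

theorem covariance_indicator_one {Ω : Type*} [MeasurableSpace Ω] {P : Measure Ω}
    [IsProbabilityMeasure P] {A C : Set Ω} (hA : MeasurableSet A) (hC : MeasurableSet C) :
    cov[A.indicator 1, C.indicator 1; P] = P.real (A ∩ C) - P.real A * P.real C := by
  have hA2 : MemLp (A.indicator (1 : Ω → ℝ)) 2 P :=
    memLp_indicator_const 2 hA 1 (.inr (measure_ne_top P A))
  have hC2 : MemLp (C.indicator (1 : Ω → ℝ)) 2 P :=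
    memLp_indicator_const 2 hC 1 (.inr (measure_ne_top P C))
  rw [covariance_eq_sub hA2 hC2, ← Set.inter_indicator_one,
    integral_indicator_one hA, integral_indicator_one hC, integral_indicator_one (hA.inter hC)]

theorem discrete_variance_formula_general
    {Ω : Type*} [MeasurableSpace Ω] (P : Measure Ω) [IsProbabilityMeasure P]
    {N p : ℕ} (B : Ω → Finset (Fin N))
    (hB : ∀ i : Fin N, MeasurableSet {ω | i ∈ B ω})
    (g : Fin N → EuclideanSpace ℝ (Fin p)) (k : ℝ) :
    (∫ ω, ‖(1 / k) • (∑ i ∈ B ω, g i)‖ ^ 2 ∂P)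
      - ‖∫ ω, (1 / k) • (∑ i ∈ B ω, g i) ∂P‖ ^ 2
    = (1 / k ^ 2) * ∑ i : Fin N, ∑ j ∈ Finset.univ.erase i,
        ((P {ω | i ∈ B ω ∧ j ∈ B ω}).toReal
          - (P {ω | i ∈ B ω}).toReal * (P {ω | j ∈ B ω}).toReal) * ⟪g i, g j⟫_ℝ
      + (1 / k ^ 2) * ∑ i : Fin N,
          (P {ω | i ∈ B ω}).toReal * (1 - (P {ω | i ∈ B ω}).toReal) * ‖g i‖ ^ 2 := by
  let X : Fin N → Ω → ℝ := fun i => (1 / k) • {ω | i ∈ B ω}.indicator 1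
  have hG : ∀ ω, (1 / k) • ∑ i ∈ B ω, g i = ∑ i, X i ω • g i := fun ω => by
    simp [X, Set.indicator_apply, ite_smul, Finset.sum_ite_mem, Finset.smul_sum]
  have hX : ∀ i ∈ Finset.univ, MemLp (X i) 2 P := fun i _ =>
    (memLp_indicator_const 2 (hB i) (1 : ℝ) (.inr (measure_ne_top P _))).const_smul (1 / k)
  have hcov : ∀ i j, cov[X i, X j; P] = 1 / k ^ 2 * ((P {ω | i ∈ B ω ∧ j ∈ B ω}).toReal
      - (P {ω | i ∈ B ω}).toReal * (P {ω | j ∈ B ω}).toReal) := fun i j => by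
    rw [covariance_smul_left, covariance_smul_right, covariance_indicator_one (hB i) (hB j),
      Set.ofPred_and, measureReal_def, measureReal_def, measureReal_def]
    ring
  simp_rw [hG]
  rw [integral_norm_sum_smul_sq_sub_norm_integral_sq hX]
  simp_rw [hcov]
  rw [Finset.mul_sum, Finset.mul_sum, ← Finset.sum_add_distrib]
  refine Finset.sum_congr rfl fun i _ => ?_
  rw [← Finset.sum_erase_add _ _ (Finset.mem_univ i), Finset.mul_sum]
  simp only [and_self, real_inner_self_eq_norm_sq, mul_assoc]
  congr 1
  ring

/-- Exact discrete analog of the variance formula of Theorem 1: the variance of the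
mini-batch gradient estimator decomposes into a pairwise-correlation term and a
diagonal term. -/
theorem discrete_variance_formula
    {Ω : Type*} [MeasurableSpace Ω] (P : Measure Ω) [IsProbabilityMeasure P]
    {N p : ℕ} (B : Ω → Finset (Fin N))
    (hB : ∀ i : Fin N, MeasurableSet {ω | i ∈ B ω})
    (hB2 : ∀ i j : Fin N, MeasurableSet {ω | i ∈ B ω ∧ j ∈ B ω})
    (g : Fin N → EuclideanSpace ℝ (Fin p)) (k : ℝ) (hk : 0 < k) :
    (∫ ω, ‖(1 / k) • (∑ i ∈ B ω, g i)‖ ^ 2 ∂P)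
      - ‖∫ ω, (1 / k) • (∑ i ∈ B ω, g i) ∂P‖ ^ 2
    = (1 / k ^ 2) * ∑ i : Fin N, ∑ j ∈ Finset.univ.erase i,
        ((P {ω | i ∈ B ω ∧ j ∈ B ω}).toReal
          - (P {ω | i ∈ B ω}).toReal * (P {ω | j ∈ B ω}).toReal) * ⟪g i, g j⟫_ℝ
      + (1 / k ^ 2) * ∑ i : Fin N,
          (P {ω | i ∈ B ω}).toReal * (1 - (P {ω | i ∈ B ω}).toReal) * ‖g i‖ ^ 2 :=
  discrete_variance_formula_general P B hB g k
end

section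
/- Let (Ω, P) be a probability space, B : Ω → Finset (Fin N) a random mini-batch with measurable inclusion events, g : Fin N → EuclideanSpace ℝ (Fin p), and k > 0, with λ i := P(i ∈ B) and ρ i j := P(i ∈ B ∧ j ∈ B), and Ĝ := (1/k) Σ_{i ∈ B} g i. If the sampling is repulsive, i.e. ρ i j ≤ λ i · λ j for all i ≠ j, and the gradients are aligned, i.e. g i · g j ≥ 0 for all i, j, then the variance of Ĝ is at most the variance of independent (non-repulsive) sampling with the same marginal inclusion probabilities: E[‖Ĝ‖²] − ‖E[Ĝ]‖² ≤ (1/k²) Σ_{i : Fin N} λ i · (1 − λ i) · ‖g i‖². (Discrete version of the variance-reduction claim of Remark 3.) -/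
open MeasureTheory Finset
open scoped InnerProductSpace

/-!
Writing `∑ i ∈ B, g i = ∑ i, 1{i ∈ B} • g i`, the variance expands as
`∑ i j, (ρ i j - λ i λ j) ⟪g i, g j⟫`, where `ρ i i = λ i`. The diagonal is the variance of
independent sampling; repulsiveness and alignment make every off-diagonal term nonpositive.
-/

theorem norm_sum_sq_eq_sum_sum_inner {ι E : Type*} [NormedAddCommGroup E]
    [InnerProductSpace ℝ E] (s : Finset ι) (f : ι → E) :
    ‖∑ i ∈ s, f i‖ ^ 2 = ∑ i ∈ s, ∑ j ∈ s, ⟪f i, f j⟫_ℝ := by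
  rw [← real_inner_self_eq_norm_sq, sum_inner]
  simp_rw [inner_sum]

theorem sum_sum_le_sum_diag_of_offDiag_nonpos {ι : Type*} [Fintype ι] (c : ι → ι → ℝ)
    (hc : ∀ i j, i ≠ j → c i j ≤ 0) : ∑ i, ∑ j, c i j ≤ ∑ i, c i i := by
  classical
  refine sum_le_sum fun i _ ↦ ?_
  rw [← add_sum_erase _ _ (mem_univ i)]
  exact add_le_of_nonpos_right <| sum_nonpos fun j hj ↦ hc i j (ne_of_mem_erase hj).symm

theorem integral_norm_smul_sq_sub_norm_integral_sq {Ω E : Type*} [MeasurableSpace Ω]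
    [NormedAddCommGroup E] [InnerProductSpace ℝ E] (P : Measure Ω) (X : Ω → E) (c : ℝ) :
    ∫ ω, ‖c • X ω‖ ^ 2 ∂P - ‖∫ ω, c • X ω ∂P‖ ^ 2
      = c ^ 2 * (∫ ω, ‖X ω‖ ^ 2 ∂P - ‖∫ ω, X ω ∂P‖ ^ 2) := by
  simp only [integral_smul, norm_smul, mul_pow, Real.norm_eq_abs, sq_abs, integral_const_mul]
  ring

section RandomFinset

variable {Ω ι : Type*} [MeasurableSpace Ω] {P : Measure Ω} [IsFiniteMeasure P] [Fintype ι]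
  {B : Ω → Finset ι}

theorem integral_sum_mem_eq_sum_measureReal_smul {E : Type*} [NormedAddCommGroup E]
    [NormedSpace ℝ E] [CompleteSpace E] (hB : ∀ i, MeasurableSet {ω | i ∈ B ω}) (f : ι → E) :
    ∫ ω, ∑ i ∈ B ω, f i ∂P = ∑ i, P.real {ω | i ∈ B ω} • f i := by
  classical
  have hsum : ∀ ω, ∑ i ∈ B ω, f i = ∑ i, {ω | i ∈ B ω}.indicator (fun _ ↦ f i) ω := fun ω ↦ by
    simp only [Set.indicator_apply, Set.mem_ofPred_eq, sum_ite_mem, univ_inter]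
  simp_rw [hsum]
  rw [integral_finsetSum _ fun i _ ↦ (integrable_const (f i)).indicator (hB i)]
  exact sum_congr rfl fun i _ ↦ integral_indicator_const (f i) (hB i)

variable {E : Type*} [NormedAddCommGroup E] [InnerProductSpace ℝ E]

theorem integral_norm_sum_mem_sq
    (hB : ∀ i j, MeasurableSet {ω | i ∈ B ω ∧ j ∈ B ω}) (f : ι → E) :
    ∫ ω, ‖∑ i ∈ B ω, f i‖ ^ 2 ∂P
      = ∑ i, ∑ j, P.real {ω | i ∈ B ω ∧ j ∈ B ω} * ⟪f i, f j⟫_ℝ := by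
  -- the pairs `(i, j)` with `i, j ∈ B ω` form a random finset with inclusion probabilities `ρ i j`
  have hpairs : ∀ ω, ‖∑ i ∈ B ω, f i‖ ^ 2 = ∑ x ∈ B ω ×ˢ B ω, ⟪f x.1, f x.2⟫_ℝ := fun ω ↦ by
    rw [norm_sum_sq_eq_sum_sum_inner, sum_product]
  simp_rw [hpairs]
  rw [integral_sum_mem_eq_sum_measureReal_smul
    (fun x ↦ by simpa only [mem_product] using hB x.1 x.2), Fintype.sum_prod_type]
  simp only [mem_product, smul_eq_mul]

theorem integral_norm_sum_mem_sq_sub_norm_integral_sq [CompleteSpace E]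
    (hB : ∀ i j, MeasurableSet {ω | i ∈ B ω ∧ j ∈ B ω}) (f : ι → E) :
    ∫ ω, ‖∑ i ∈ B ω, f i‖ ^ 2 ∂P - ‖∫ ω, ∑ i ∈ B ω, f i ∂P‖ ^ 2
      = ∑ i, ∑ j, (P.real {ω | i ∈ B ω ∧ j ∈ B ω}
          - P.real {ω | i ∈ B ω} * P.real {ω | j ∈ B ω}) * ⟪f i, f j⟫_ℝ := by
  have hB₁ : ∀ i, MeasurableSet {ω | i ∈ B ω} := fun i ↦ by simpa only [and_self] using hB i i
  rw [integral_norm_sum_mem_sq hB, integral_sum_mem_eq_sum_measureReal_smul hB₁,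
    norm_sum_sq_eq_sum_sum_inner, ← sum_sub_distrib]
  refine sum_congr rfl fun i _ ↦ ?_
  rw [← sum_sub_distrib]
  refine sum_congr rfl fun j _ ↦ ?_
  rw [real_inner_smul_left, real_inner_smul_right]
  ring

end RandomFinset

theorem discrete_repulsive_variance_reduction_general
    {Ω : Type*} [MeasurableSpace Ω] (P : Measure Ω) [IsProbabilityMeasure P]
    {N p : ℕ} (B : Ω → Finset (Fin N))
    (hB2 : ∀ i j : Fin N, MeasurableSet {ω | i ∈ B ω ∧ j ∈ B ω})
    (g : Fin N → EuclideanSpace ℝ (Fin p)) (k : ℝ)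
    (hrep : ∀ i j : Fin N, i ≠ j →
      (P {ω | i ∈ B ω ∧ j ∈ B ω}).toReal
        ≤ (P {ω | i ∈ B ω}).toReal * (P {ω | j ∈ B ω}).toReal)
    (halign : ∀ i j : Fin N, 0 ≤ ⟪g i, g j⟫_ℝ) :
    (∫ ω, ‖(1 / k) • (∑ i ∈ B ω, g i)‖ ^ 2 ∂P)
      - ‖∫ ω, (1 / k) • (∑ i ∈ B ω, g i) ∂P‖ ^ 2
    ≤ (1 / k ^ 2) * ∑ i : Fin N,
        (P {ω | i ∈ B ω}).toReal * (1 - (P {ω | i ∈ B ω}).toReal) * ‖g i‖ ^ 2 := by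
  rw [integral_norm_smul_sq_sub_norm_integral_sq,
    integral_norm_sum_mem_sq_sub_norm_integral_sq hB2, one_div_pow]
  refine mul_le_mul_of_nonneg_left ?_ (by positivity)
  refine (sum_sum_le_sum_diag_of_offDiag_nonpos _ fun i j hij ↦
    mul_nonpos_of_nonpos_of_nonneg (sub_nonpos.2 (hrep i j hij)) (halign i j)).trans_eq ?_
  simp only [and_self, real_inner_self_eq_norm_sq]
  exact sum_congr rfl fun i _ ↦ by ring

/-- Discrete version of Remark 3: a repulsive mini-batch sampling scheme with aligned
gradients has variance at most that of independent sampling with the same marginal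
inclusion probabilities. -/
theorem discrete_repulsive_variance_reduction
    {Ω : Type*} [MeasurableSpace Ω] (P : Measure Ω) [IsProbabilityMeasure P]
    {N p : ℕ} (B : Ω → Finset (Fin N))
    (hB : ∀ i : Fin N, MeasurableSet {ω | i ∈ B ω})
    (hB2 : ∀ i j : Fin N, MeasurableSet {ω | i ∈ B ω ∧ j ∈ B ω})
    (g : Fin N → EuclideanSpace ℝ (Fin p)) (k : ℝ) (hk : 0 < k)
    (hrep : ∀ i j : Fin N, i ≠ j →
      (P {ω | i ∈ B ω ∧ j ∈ B ω}).toReal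
        ≤ (P {ω | i ∈ B ω}).toReal * (P {ω | j ∈ B ω}).toReal)
    (halign : ∀ i j : Fin N, 0 ≤ ⟪g i, g j⟫_ℝ) :
    (∫ ω, ‖(1 / k) • (∑ i ∈ B ω, g i)‖ ^ 2 ∂P)
      - ‖∫ ω, (1 / k) • (∑ i ∈ B ω, g i) ∂P‖ ^ 2
    ≤ (1 / k ^ 2) * ∑ i : Fin N,
        (P {ω | i ∈ B ω}).toReal * (1 - (P {ω | i ∈ B ω}).toReal) * ‖g i‖ ^ 2 :=
  discrete_repulsive_variance_reduction_general P B hB2 g k hrep halign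
end
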